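/- arXiv:1302.1454 — 2 statements merged into one kernel-verified Lean document; each statement's English description precedes it below -/
import Mathlib

section
/- Let p be an odd prime and a an integer with gcd(a,p)=1. Then for every natural number l, one has S(p^{2l+1}, a) = p^l · S(p, a). -/
open Finset

/-- `e z = exp(2 π i z)`. -/
noncomputable def e (z : ℝ) : ℂ := Complex.exp (2 * Real.pi * Complex.I * z)

/-- The quadratic Gauss sum `S(q,a) = ∑_{r=1}^{q} e(a r² / q)`. -/
noncomputable def S (q : ℕ) (a : ℤ) : ℂ :=
  ∑ r ∈ Finset.Icc 1 q, e ((a : ℝ) * (r : ℝ) ^ 2 / (q : ℝ))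

/-!
Write `r ∈ [0, q m²)` as `r = q m t + s` with `s < q m`, `t < m`. Modulo integers the phase
`a r² / (q m²)` equals `a s² / (q m²) + 2 a s t / m`, so the sum over `t` vanishes unless
`m ∣ 2 a s`, i.e. `m ∣ s` when `2a` is coprime to `m`; the surviving terms `s = m u` give
`S(q m², a) = m S(q, a)`. For odd `p` coprime to `a`, iterating this from `q = p` gives the claim.
-/

lemma e_add (x y : ℝ) : e (x + y) = e x * e y := by
  simp only [e, Complex.ofReal_add, mul_add, Complex.exp_add]

lemma e_intCast (n : ℤ) : e n = 1 := by
  rw [e, ← Complex.exp_int_mul_two_pi_mul_I n]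
  push_cast
  ring_nf

lemma e_pow (x : ℝ) (n : ℕ) : e x ^ n = e (n * x) := by
  rw [e, e, ← Complex.exp_nat_mul]
  push_cast
  ring_nf

lemma e_eq_one_iff (x : ℝ) : e x = 1 ↔ ∃ n : ℤ, x = n := by
  have h2πi : (2 * Real.pi * Complex.I : ℂ) ≠ 0 := by simp [Real.pi_ne_zero]
  simp only [e, Complex.exp_eq_one_iff, mul_comm _ (2 * Real.pi * Complex.I : ℂ),
    mul_right_inj' h2πi]
  exact exists_congr fun n => by norm_cast

lemma sum_range_e_mul_div (n : ℕ) (c : ℤ) :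
    ∑ t ∈ range n, e (c * t / n) = if (n : ℤ) ∣ c then (n : ℂ) else 0 := by
  rcases Nat.eq_zero_or_pos n with rfl | hn
  · simp
  have hn' : (n : ℝ) ≠ 0 := by positivity
  have hpow : ∀ t : ℕ, e (c * t / n) = e (c / n) ^ t := fun t => by
    rw [e_pow]; ring_nf
  simp only [hpow]
  split_ifs with hdvd
  · obtain ⟨k, rfl⟩ := hdvd
    have hone : e (((n * k : ℤ) : ℝ) / n) = 1 := by
      rw [← e_intCast k]; push_cast; field_simp
    simp only [hone, one_pow, sum_const, card_range, nsmul_eq_mul, mul_one]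
  · have hne : e (c / n) ≠ 1 := by
      rw [Ne, e_eq_one_iff]
      rintro ⟨k, hk⟩
      refine hdvd ⟨k, ?_⟩
      rw [div_eq_iff hn'] at hk
      exact_mod_cast (hk.trans (mul_comm _ _))
    have hroot : e (c / n) ^ n = 1 := by
      rw [e_pow, mul_div_cancel₀ _ hn', e_intCast]
    rw [geom_sum_eq hne, hroot, sub_self, zero_div]

lemma sum_range_mul_eq_sum_sum {M : Type*} [AddCommMonoid M] (f : ℕ → M) (m n : ℕ) :
    ∑ r ∈ range (m * n), f r = ∑ t ∈ range n, ∑ s ∈ range m, f (m * t + s) := by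
  induction n with
  | zero => simp
  | succ n ih => rw [Nat.mul_succ, sum_range_add, ih, sum_range_succ]

lemma sum_range_mul_ite_dvd {M : Type*} [AddCommMonoid M] (g : ℕ → M) {m : ℕ} (hm : 0 < m)
    (q : ℕ) : ∑ s ∈ range (m * q), (if m ∣ s then g s else 0) = ∑ u ∈ range q, g (m * u) := by
  rw [sum_range_mul_eq_sum_sum]
  refine sum_congr rfl fun u _ => ?_
  have hdvd : ∀ v ∈ range m, m ∣ m * u + v ↔ v = 0 := fun v hv =>
    ⟨fun h => Nat.eq_zero_of_dvd_of_lt ((Nat.dvd_add_right (dvd_mul_right m u)).mp h)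
      (mem_range.mp hv), fun h => h ▸ dvd_mul_right m u⟩
  rw [sum_congr rfl fun v hv => if_congr (hdvd v hv) rfl rfl,
    sum_ite_eq' _ _ fun v => g (m * u + v)]
  simp [hm]

lemma S_eq_sum_range (q : ℕ) (a : ℤ) :
    S q a = ∑ r ∈ range q, e ((a : ℝ) * (r : ℝ) ^ 2 / (q : ℝ)) := by
  let f : ℕ → ℂ := fun r => e ((a : ℝ) * (r : ℝ) ^ 2 / (q : ℝ))
  have hq : f q = f 0 := by
    rcases Nat.eq_zero_or_pos q with rfl | hq
    · rfl
    have h : (a : ℝ) * (q : ℝ) ^ 2 / q = ((a * q : ℤ) : ℝ) := by push_cast; field_simp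
    show e _ = e _
    rw [h, e_intCast]
    simp [e]
  have hshift := (sum_range_succ f q).symm.trans (sum_range_succ' f q)
  rw [hq, add_left_inj] at hshift
  rw [S, ← Ico_add_one_right_eq_Icc, sum_Ico_eq_sum_range, Nat.add_sub_cancel]
  simp_rw [add_comm 1]
  exact hshift.symm

lemma sum_range_e_sq_add_mul (a : ℤ) {q : ℕ} (hq : q ≠ 0) (m s : ℕ) :
    ∑ t ∈ range m, e (a * ((q * m * t + s : ℕ) : ℝ) ^ 2 / ((q * m * m : ℕ) : ℝ)) =
      e (a * (s : ℝ) ^ 2 / ((q * m * m : ℕ) : ℝ)) *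
        if (m : ℤ) ∣ 2 * a * s then (m : ℂ) else 0 := by
  rcases eq_or_ne m 0 with rfl | hm
  · simp
  rw [← sum_range_e_mul_div, mul_sum]
  refine sum_congr rfl fun t _ => ?_
  have hsplit : (a : ℝ) * ((q * m * t + s : ℕ) : ℝ) ^ 2 / ((q * m * m : ℕ) : ℝ) =
      a * (s : ℝ) ^ 2 / ((q * m * m : ℕ) : ℝ) + ((2 * a * s : ℤ) : ℝ) * t / m +
        ((a * q * t ^ 2 : ℤ) : ℝ) := by
    push_cast
    field_simp
    ring
  rw [hsplit, e_add, e_add, e_intCast, mul_one]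

theorem S_mul_sq (q m : ℕ) (a : ℤ) (h : IsCoprime (2 * a) m) : S (q * m ^ 2) a = m * S q a := by
  rcases eq_or_ne q 0 with rfl | hq
  · simp [S]
  have hm : 0 < m := by
    refine Nat.pos_of_ne_zero fun hm => ?_
    rw [hm, Nat.cast_zero, isCoprime_zero_right, Int.isUnit_iff] at h
    omega
  have hdvd : ∀ s : ℕ, (m : ℤ) ∣ 2 * a * s ↔ m ∣ s := fun s =>
    ⟨fun hs => Int.natCast_dvd_natCast.mp (h.symm.dvd_of_dvd_mul_left hs),
      fun hs => dvd_mul_of_dvd_right (Int.natCast_dvd_natCast.mpr hs) _⟩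
  calc S (q * m ^ 2) a
      = ∑ r ∈ range (q * m * m), e (a * (r : ℝ) ^ 2 / ((q * m * m : ℕ) : ℝ)) := by
        rw [S_eq_sum_range, sq, mul_assoc]
    _ = ∑ s ∈ range (m * q), ∑ t ∈ range m,
          e (a * ((q * m * t + s : ℕ) : ℝ) ^ 2 / ((q * m * m : ℕ) : ℝ)) := by
        rw [sum_range_mul_eq_sum_sum, sum_comm, mul_comm m q]
    _ = ∑ s ∈ range (m * q),
          if m ∣ s then (m : ℂ) * e (a * (s : ℝ) ^ 2 / ((q * m * m : ℕ) : ℝ)) else 0 := by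
        refine sum_congr rfl fun s _ => ?_
        rw [sum_range_e_sq_add_mul a hq, mul_comm]
        simp only [hdvd, ite_mul, zero_mul]
    _ = ∑ u ∈ range q, (m : ℂ) * e (a * ((m * u : ℕ) : ℝ) ^ 2 / ((q * m * m : ℕ) : ℝ)) :=
        sum_range_mul_ite_dvd _ hm q
    _ = m * S q a := by
        rw [S_eq_sum_range, mul_sum]
        refine sum_congr rfl fun u _ => ?_
        congr 2
        push_cast
        field_simp

theorem gauss_sum_odd_prime_power_general (p : ℕ) (hodd : Odd p)
    (a : ℤ) (ha : Int.gcd a p = 1) (l : ℕ) :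
    S (p ^ (2 * l + 1)) a = (p : ℂ) ^ l * S p a := by
  have hcop : IsCoprime (2 * a) p :=
    (Int.isCoprime_iff_gcd_eq_one.mpr (by exact_mod_cast Nat.coprime_two_left.mpr hodd)).mul_left
      (Int.isCoprime_iff_gcd_eq_one.mpr ha)
  induction l with
  | zero => simp
  | succ l ih =>
    rw [show 2 * (l + 1) + 1 = 2 * l + 1 + 2 by ring, pow_add, S_mul_sq _ _ _ hcop, ih]
    ring

theorem gauss_sum_odd_prime_power (p : ℕ) (hp : p.Prime) (hodd : Odd p)
    (a : ℤ) (ha : Int.gcd a p = 1) (l : ℕ) :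
    S (p ^ (2 * l + 1)) a = (p : ℂ) ^ l * S p a :=
  gauss_sum_odd_prime_power_general p hodd a ha l
end

section
/- Let p be an odd prime and m an integer. The number T(m) of solutions (x₁,x₂,x₃) with 1 ≤ x_i ≤ p of the congruence x₁² + x₂² + x₃² ≡ m (mod p) equals p² + p·χ_p(−m). -/
open Finset

section Scratch
variable {p : ℕ} [Fact p.Prime]

lemma aux_ringChar (hodd : Odd p) : ringChar (ZMod p) ≠ 2 := by
  rw [ZMod.ringChar_zmod_n]
  rintro rfl
  exact (Nat.not_odd_iff_even.mpr even_two) hodd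

lemma card_sq_eq (hodd : Odd p) (a : ZMod p) :
    ((univ.filter fun z : ZMod p => z ^ 2 = a).card : ℤ) = quadraticChar (ZMod p) a + 1 := by
  have := quadraticChar_card_sqrts (aux_ringChar hodd) a
  rwa [Set.toFinset_setOf] at this

lemma jacobi_aux (hodd : Odd p) (a : ZMod p) :
    ∑ b : ZMod p, quadraticChar (ZMod p) b * quadraticChar (ZMod p) (a - b)
      = if a = 0 then ((p : ℤ) - 1) * quadraticChar (ZMod p) (-1)
        else - quadraticChar (ZMod p) (-1) := by
  set χ := quadraticChar (ZMod p) with hχ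
  rcases eq_or_ne a 0 with rfl | ha
  · rw [if_pos rfl]
    have h1 : ∀ b : ZMod p, χ b * χ (0 - b) = χ (-1) * (χ b ^ 2) := by
      intro b
      rw [zero_sub, show (-b : ZMod p) = -1 * b by ring, map_mul]
      ring
    rw [Finset.sum_congr rfl fun b _ => h1 b, ← Finset.mul_sum]
    have h2 : ∑ b : ZMod p, χ b ^ 2 = ∑ b : ZMod p, ((1:ℤ) - if b = 0 then 1 else 0) := by
      refine Finset.sum_congr rfl fun b _ => ?_
      rcases eq_or_ne b 0 with rfl | hb
      · simp [hχ]
      · rw [if_neg hb, quadraticChar_sq_one hb]; ring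
    rw [h2, Finset.sum_sub_distrib, Finset.sum_ite_eq' univ (0 : ZMod p) (fun _ => (1:ℤ)),
      if_pos (mem_univ _), Finset.sum_const, card_univ, ZMod.card]
    ring
  · rw [if_neg ha]
    have h0 : ∑ b : ZMod p, χ b * χ (a - b) = ∑ t : ZMod p, χ (a * t) * χ (a - a * t) :=
      (Equiv.sum_comp (Equiv.mulLeft₀ a ha) (fun b => χ b * χ (a - b))).symm
    have h1 : ∀ t : ZMod p, χ (a * t) * χ (a - a * t) = χ t * χ (1 - t) := by
      intro t
      rw [show a - a * t = a * (1 - t) by ring, map_mul, map_mul]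
      have h := quadraticChar_sq_one ha
      rw [hχ]
      linear_combination (quadraticChar (ZMod p) t * quadraticChar (ZMod p) (1 - t)) * h
    rw [h0, Finset.sum_congr rfl fun t _ => h1 t]
    have h2 : ∑ t : ZMod p, χ t * χ (1 - t) = jacobiSum χ χ := rfl
    rw [h2, hχ]
    have h3 := jacobiSum_nontrivial_inv (quadraticChar_ne_one (aux_ringChar hodd))
    rwa [(quadraticChar_isQuadratic (ZMod p)).inv] at h3

lemma sum_char_sub_sq (hodd : Odd p) (a : ZMod p) :
    ∑ y : ZMod p, quadraticChar (ZMod p) (a - y ^ 2)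
      = if a = 0 then ((p : ℤ) - 1) * quadraticChar (ZMod p) (-1)
        else - quadraticChar (ZMod p) (-1) := by
  set χ := quadraticChar (ZMod p) with hχ
  have h0 : ∑ y : ZMod p, χ (a - y ^ 2)
      = ∑ b : ZMod p, ∑ y ∈ univ.filter (fun y : ZMod p => y ^ 2 = b), χ (a - y ^ 2) :=
    (Finset.sum_fiberwise univ (fun y : ZMod p => y ^ 2) (fun y => χ (a - y ^ 2))).symm
  have h1 : ∀ b : ZMod p, ∑ y ∈ univ.filter (fun y : ZMod p => y ^ 2 = b), χ (a - y ^ 2)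
      = (χ b + 1) * χ (a - b) := by
    intro b
    rw [Finset.sum_congr rfl (fun y hy => by
      rw [(Finset.mem_filter.mp hy).2]), Finset.sum_const, ← card_sq_eq hodd b]
    simp [mul_comm]
  rw [h0, Finset.sum_congr rfl fun b _ => h1 b]
  have h2 : ∀ b : ZMod p, (χ b + 1) * χ (a - b) = χ b * χ (a - b) + χ (a - b) := fun b => by ring
  rw [Finset.sum_congr rfl fun b _ => h2 b, Finset.sum_add_distrib, jacobi_aux hodd a]
  have h3 : ∑ b : ZMod p, χ (a - b) = ∑ c : ZMod p, χ c :=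
    Equiv.sum_comp (Equiv.subLeft a) χ
  rw [h3, quadraticChar_sum_zero (aux_ringChar hodd), add_zero]

lemma count_zmod (hodd : Odd p) (μ : ZMod p) :
    ((univ.filter (fun v : ZMod p × ZMod p × ZMod p =>
        v.1 ^ 2 + v.2.1 ^ 2 + v.2.2 ^ 2 = μ)).card : ℤ)
      = (p : ℤ) ^ 2 + (p : ℤ) * quadraticChar (ZMod p) (-μ) := by
  set χ := quadraticChar (ZMod p) with hχ
  have h0 : ((univ.filter (fun v : ZMod p × ZMod p × ZMod p =>
        v.1 ^ 2 + v.2.1 ^ 2 + v.2.2 ^ 2 = μ)).card : ℤ)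
      = ∑ x : ZMod p, ∑ y : ZMod p,
          ((univ.filter (fun z : ZMod p => z ^ 2 = μ - x ^ 2 - y ^ 2)).card : ℤ) := by
    rw [Finset.card_filter]
    push_cast
    rw [Fintype.sum_prod_type]
    refine Finset.sum_congr rfl fun x _ => ?_
    rw [Fintype.sum_prod_type]
    refine Finset.sum_congr rfl fun y _ => ?_
    rw [Finset.card_filter]
    push_cast
    refine Finset.sum_congr rfl fun z _ => ?_
    congr 1
    simp only [eq_iff_iff]
    constructor
    · intro h; linear_combination h
    · intro h; linear_combination h
  rw [h0]
  have h1 : ∀ x : ZMod p, ∑ y : ZMod p,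
      ((univ.filter (fun z : ZMod p => z ^ 2 = μ - x ^ 2 - y ^ 2)).card : ℤ)
      = (p : ℤ) + (if μ - x ^ 2 = 0 then ((p : ℤ) - 1) * χ (-1) else - χ (-1)) := by
    intro x
    rw [Finset.sum_congr rfl fun y _ => by
      rw [card_sq_eq hodd (μ - x ^ 2 - y ^ 2)]]
    rw [Finset.sum_add_distrib, Finset.sum_const, card_univ, ZMod.card]
    have : ∑ y : ZMod p, χ (μ - x ^ 2 - y ^ 2) = ∑ y : ZMod p, χ ((μ - x ^ 2) - y ^ 2) := by
      refine Finset.sum_congr rfl fun y _ => by ring_nf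
    rw [this, sum_char_sub_sq hodd (μ - x ^ 2)]
    ring
  rw [Finset.sum_congr rfl fun x _ => h1 x, Finset.sum_add_distrib, Finset.sum_const,
    card_univ, ZMod.card]
  rw [Finset.sum_ite, Finset.sum_const, Finset.sum_const]
  have hfe : univ.filter (fun x : ZMod p => μ - x ^ 2 = 0)
      = univ.filter (fun x : ZMod p => x ^ 2 = μ) := by
    refine Finset.filter_congr fun x _ => ?_
    rw [sub_eq_zero, eq_comm]
  have hfe' : univ.filter (fun x : ZMod p => ¬ μ - x ^ 2 = 0)
      = univ.filter (fun x : ZMod p => ¬ x ^ 2 = μ) := by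
    refine Finset.filter_congr fun x _ => ?_
    rw [sub_eq_zero, eq_comm]
  rw [hfe, hfe']
  have hN := card_sq_eq hodd μ
  have hcard : (univ.filter (fun x : ZMod p => x ^ 2 = μ)).card
      + (univ.filter (fun x : ZMod p => ¬ x ^ 2 = μ)).card = p := by
    rw [Finset.card_filter_add_card_filter_not, card_univ, ZMod.card]
  have hneg : χ (-μ) = χ (-1) * χ μ := by rw [hχ, ← map_mul, neg_one_mul]
  have hc2 : ((univ.filter (fun x : ZMod p => ¬ x ^ 2 = μ)).card : ℤ)
      = (p : ℤ) - (χ μ + 1) := by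
    rw [← hN]
    omega
  rw [hneg]
  simp only [nsmul_eq_mul]
  rw [hN, hc2]
  ring

lemma icc_inj {x y : ℤ} (hx : x ∈ Finset.Icc (1:ℤ) (p:ℤ)) (hy : y ∈ Finset.Icc (1:ℤ) (p:ℤ))
    (h : (x : ZMod p) = (y : ZMod p)) : x = y := by
  rw [ZMod.intCast_eq_intCast_iff] at h
  have hd := Int.ModEq.dvd h
  rw [Finset.mem_Icc] at hx hy
  obtain ⟨k, hk⟩ := hd
  have hp0 : (0:ℤ) < p := by exact_mod_cast (Fact.out : p.Prime).pos
  rcases lt_trichotomy k 0 with hko | hko | hko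
  · have h1 : (p:ℤ) * k ≤ (p:ℤ) * (-1) :=
      mul_le_mul_of_nonneg_left (by omega) hp0.le
    rw [mul_neg_one] at h1
    omega
  · rw [hko, mul_zero] at hk
    omega
  · have h1 : (p:ℤ) * 1 ≤ (p:ℤ) * k :=
      mul_le_mul_of_nonneg_left (by omega) hp0.le
    rw [mul_one] at h1
    omega

lemma icc_surj (a : ZMod p) : ∃ x ∈ Finset.Icc (1:ℤ) (p:ℤ), (x : ZMod p) = a := by
  have hp1 : 1 ≤ p := (Fact.out : p.Prime).one_lt.le
  rcases eq_or_ne a 0 with rfl | ha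
  · exact ⟨(p : ℤ), Finset.mem_Icc.mpr ⟨by exact_mod_cast hp1, le_refl _⟩, by
      push_cast; simp⟩
  · have hv0 : a.val ≠ 0 := fun h => ha (by rwa [← ZMod.val_eq_zero])
    have hvlt : a.val < p := ZMod.val_lt a
    refine ⟨(a.val : ℤ), Finset.mem_Icc.mpr ⟨by exact_mod_cast Nat.one_le_iff_ne_zero.mpr hv0,
      by exact_mod_cast hvlt.le⟩, ?_⟩
    push_cast
    simp [ZMod.natCast_val, ZMod.cast_id]

lemma icc_card_eq (Q : ZMod p × ZMod p × ZMod p → Prop) [DecidablePred Q] :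
    ((Finset.Icc (1:ℤ) (p:ℤ) ×ˢ Finset.Icc (1:ℤ) (p:ℤ) ×ˢ Finset.Icc (1:ℤ) (p:ℤ)).filter
      (fun x => Q ((x.1 : ZMod p), (x.2.1 : ZMod p), (x.2.2 : ZMod p)))).card
    = (univ.filter Q).card := by
  refine Finset.card_bij
    (fun x _ => ((x.1 : ZMod p), (x.2.1 : ZMod p), (x.2.2 : ZMod p))) ?_ ?_ ?_
  · intro x hx
    rw [Finset.mem_filter] at hx ⊢
    exact ⟨mem_univ _, hx.2⟩
  · intro x hx y hy h
    rw [Finset.mem_filter, Finset.mem_product, Finset.mem_product] at hx hy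
    obtain ⟨⟨hx1, hx2, hx3⟩, -⟩ := hx
    obtain ⟨⟨hy1, hy2, hy3⟩, -⟩ := hy
    simp only [Prod.mk.injEq] at h
    obtain ⟨h1, h2, h3⟩ := h
    exact Prod.ext (icc_inj hx1 hy1 h1) (Prod.ext (icc_inj hx2 hy2 h2) (icc_inj hx3 hy3 h3))
  · intro b hb
    rw [Finset.mem_filter] at hb
    obtain ⟨x1, hx1, e1⟩ := icc_surj (p := p) b.1
    obtain ⟨x2, hx2, e2⟩ := icc_surj (p := p) b.2.1
    obtain ⟨x3, hx3, e3⟩ := icc_surj (p := p) b.2.2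
    refine ⟨(x1, x2, x3), Finset.mem_filter.mpr ⟨Finset.mem_product.mpr
      ⟨hx1, Finset.mem_product.mpr ⟨hx2, hx3⟩⟩, ?_⟩, ?_⟩
    · simp only [e1, e2, e3]
      exact hb.2
    · simp [e1, e2, e3]

end Scratch

theorem count_three_squares_mod_p (p : ℕ) [Fact p.Prime] (hodd : Odd p) (m : ℤ) :
    (((((Finset.Icc (1 : ℤ) (p : ℤ)) ×ˢ (Finset.Icc (1 : ℤ) (p : ℤ)) ×ˢ
        (Finset.Icc (1 : ℤ) (p : ℤ))).filter
        (fun x => (x.1 ^ 2 + x.2.1 ^ 2 + x.2.2 ^ 2) % (p : ℤ) = m % (p : ℤ))).card : ℤ)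
      = (p : ℤ) ^ 2 + (p : ℤ) * legendreSym p (-m)) := by
  have hfil : ((Finset.Icc (1 : ℤ) (p : ℤ)) ×ˢ (Finset.Icc (1 : ℤ) (p : ℤ)) ×ˢ
        (Finset.Icc (1 : ℤ) (p : ℤ))).filter
        (fun x => (x.1 ^ 2 + x.2.1 ^ 2 + x.2.2 ^ 2) % (p : ℤ) = m % (p : ℤ))
      = ((Finset.Icc (1 : ℤ) (p : ℤ)) ×ˢ (Finset.Icc (1 : ℤ) (p : ℤ)) ×ˢ
        (Finset.Icc (1 : ℤ) (p : ℤ))).filter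
        (fun x => ((fun v : ZMod p × ZMod p × ZMod p => v.1 ^ 2 + v.2.1 ^ 2 + v.2.2 ^ 2 = (m : ZMod p))
          ((x.1 : ZMod p), (x.2.1 : ZMod p), (x.2.2 : ZMod p)))) := by
    refine Finset.filter_congr fun x _ => ?_
    constructor
    · intro h
      have : ((x.1 ^ 2 + x.2.1 ^ 2 + x.2.2 ^ 2 : ℤ) : ZMod p) = (m : ZMod p) :=
        (ZMod.intCast_eq_intCast_iff _ _ _).mpr h
      push_cast at this
      exact this
    · intro h
      refine (ZMod.intCast_eq_intCast_iff _ _ _).mp ?_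
      push_cast
      exact h
  rw [hfil, icc_card_eq (fun v : ZMod p × ZMod p × ZMod p =>
    v.1 ^ 2 + v.2.1 ^ 2 + v.2.2 ^ 2 = (m : ZMod p)), count_zmod hodd]
  have : legendreSym p (-m) = quadraticChar (ZMod p) (-(m : ZMod p)) := by
    rw [legendreSym]
    push_cast
    rfl
  rw [this]
end
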